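/- Let X, Y, Z be independent exponentially distributed random variables with rates μ₁, μ₂, μ₃ > 0 respectively, let d₁, d₂ > 0 and d = d₁ + d₂. Define P^C(ρ) = E[ Q(√(2d₁ρX + 2d₂ρY)) · Q(√(2d₁ρX)) · (1 − Q(√(2d₁ρZ))) + Q(√(2d₁ρX)) · Q(√(2d₁ρZ)) ] and P^{NC}(ρ) = E[ Q(√(2dρX)) ]. Then there exists ρ₀ > 0 such that for all ρ ≥ ρ₀, P^C(ρ) < P^{NC}(ρ); that is, for sufficiently large SNR the CSA protocol strictly outperforms non-cooperative detection. -/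

import Mathlib

open MeasureTheory Real

/-- The Gaussian tail function `Q(x) = ∫_x^∞ (1/√(2π)) e^{−t²/2} dt`. -/
noncomputable def gaussQ (x : ℝ) : ℝ :=
  ∫ t in Set.Ioi x, (Real.sqrt (2 * Real.pi))⁻¹ * Real.exp (-t ^ 2 / 2)

open Set

lemma integrable_gauss : Integrable (fun t : ℝ => (Real.sqrt (2 * Real.pi))⁻¹ * Real.exp (-t ^ 2 / 2)) := by
  have h : ∀ t : ℝ, -t ^ 2 / 2 = -(1/2 : ℝ) * t ^ 2 := fun t => by ring
  simp_rw [h]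
  exact (integrable_exp_neg_mul_sq (by norm_num : (0:ℝ) < 1/2)).const_mul _

lemma gaussQ_nonneg (x : ℝ) : 0 ≤ gaussQ x :=
  setIntegral_nonneg measurableSet_Ioi (fun t _ => by positivity)

lemma gaussQ_anti : Antitone gaussQ := by
  intro x y h
  exact setIntegral_mono_set integrable_gauss.integrableOn
    (ae_of_all _ fun t => by positivity)
    (HasSubset.Subset.eventuallyLE (Ioi_subset_Ioi h))

lemma gaussQ_meas : Measurable gaussQ := gaussQ_anti.measurable

lemma gaussQ_zero : gaussQ 0 = 1 / 2 := by
  have htot : (∫ t : ℝ, (Real.sqrt (2 * Real.pi))⁻¹ * Real.exp (-t ^ 2 / 2)) = 1 := by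
    rw [integral_const_mul]
    have h : ∀ t : ℝ, -t ^ 2 / 2 = -(1/2 : ℝ) * t ^ 2 := fun t => by ring
    simp_rw [h, integral_gaussian]
    rw [show (π / (1/2 : ℝ)) = 2 * π by ring]
    exact inv_mul_cancel₀ (Real.sqrt_ne_zero'.2 (by positivity))
  have hsym : (∫ t in Iic (0:ℝ), (Real.sqrt (2 * Real.pi))⁻¹ * Real.exp (-t ^ 2 / 2))
      = ∫ t in Ioi (0:ℝ), (Real.sqrt (2 * Real.pi))⁻¹ * Real.exp (-t ^ 2 / 2) := by
    rw [← neg_zero, ← integral_comp_neg_Ioi]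
    simp
  have hsplit := intervalIntegral.integral_Iic_add_Ioi (b := (0:ℝ))
    integrable_gauss.integrableOn integrable_gauss.integrableOn
  rw [htot] at hsplit
  have hgq : gaussQ 0 = ∫ t in Ioi (0:ℝ), (Real.sqrt (2 * Real.pi))⁻¹ * Real.exp (-t ^ 2 / 2) := rfl
  linarith [hsym, hsplit, hgq]

lemma gaussQ_le_half {x : ℝ} (hx : 0 ≤ x) : gaussQ x ≤ 1 / 2 :=
  gaussQ_zero ▸ gaussQ_anti hx

lemma gaussQ_chernoff (t : ℝ) (ht : 0 ≤ t) : gaussQ t ≤ 1 / 2 * Real.exp (-t ^ 2 / 2) := by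
  have htr : (∫ s in Ioi t, (Real.sqrt (2 * Real.pi))⁻¹ * Real.exp (-(s - t) ^ 2 / 2)) = gaussQ 0 := by
    have hind : ∀ s : ℝ,
        (Ioi t).indicator (fun s => (Real.sqrt (2 * Real.pi))⁻¹ * Real.exp (-(s - t) ^ 2 / 2)) s
          = (Ioi (0:ℝ)).indicator (fun u => (Real.sqrt (2 * Real.pi))⁻¹ * Real.exp (-u ^ 2 / 2)) (s - t) := by
      intro s
      by_cases h : t < s
      · rw [indicator_of_mem (mem_Ioi.2 h), indicator_of_mem (mem_Ioi.2 (sub_pos.2 h))]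
      · rw [indicator_of_notMem (by simpa using h),
          indicator_of_notMem (by simp only [mem_Ioi, sub_pos]; exact h)]
    rw [← integral_indicator measurableSet_Ioi]
    simp_rw [hind]
    rw [integral_sub_right_eq_self
      (fun u => (Ioi (0:ℝ)).indicator (fun u => (Real.sqrt (2 * Real.pi))⁻¹ * Real.exp (-u ^ 2 / 2)) u) t]
    rw [integral_indicator measurableSet_Ioi]
    rfl
  have hmono : gaussQ t ≤ ∫ s in Ioi t,
      Real.exp (-t ^ 2 / 2) * ((Real.sqrt (2 * Real.pi))⁻¹ * Real.exp (-(s - t) ^ 2 / 2)) := by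
    refine setIntegral_mono_on integrable_gauss.integrableOn ?_ measurableSet_Ioi ?_
    · exact ((integrable_gauss.comp_sub_right t).const_mul _).integrableOn
    · intro s hs
      rw [mem_Ioi] at hs
      rw [← mul_assoc, mul_comm (Real.exp (-t ^ 2 / 2)), mul_assoc, ← Real.exp_add]
      have harg : -s ^ 2 / 2 ≤ -t ^ 2 / 2 + -(s - t) ^ 2 / 2 := by nlinarith [mul_nonneg ht (le_of_lt (sub_pos.2 hs))]
      exact mul_le_mul_of_nonneg_left (Real.exp_le_exp.2 harg) (by positivity)
  calc gaussQ t ≤ _ := hmono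
    _ = Real.exp (-t ^ 2 / 2) * gaussQ 0 := by rw [integral_const_mul, htr]
    _ = 1 / 2 * Real.exp (-t ^ 2 / 2) := by rw [gaussQ_zero]; ring

lemma gaussQ_one_pos : 0 < gaussQ 1 := by
  unfold gaussQ
  rw [setIntegral_pos_iff_support_of_nonneg_ae (ae_of_all _ fun t => by positivity)
    integrable_gauss.integrableOn]
  have hsupp : Function.support (fun t : ℝ => (Real.sqrt (2 * Real.pi))⁻¹ * Real.exp (-t ^ 2 / 2)) = univ := by
    ext t; simp only [Function.mem_support, mem_univ, iff_true]
    positivity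
  rw [hsupp, univ_inter]
  simp

lemma lint_cexp (c a : ℝ) (hc : 0 ≤ c) (ha : 0 < a) :
    ∫⁻ x in Ioi (0:ℝ), ENNReal.ofReal (c * Real.exp (-(a * x))) = ENNReal.ofReal (c / a) := by
  have hint : IntegrableOn (fun x => c * Real.exp (-(a * x))) (Ioi (0:ℝ)) := by
    have h := (exp_neg_integrableOn_Ioi 0 ha).const_mul c
    simp only [neg_mul] at h
    exact h
  rw [← ofReal_integral_eq_lintegral_ofReal hint (ae_of_all _ fun x => by positivity)]
  congr 1
  rw [integral_const_mul]
  have hv : (∫ x in Ioi (0:ℝ), Real.exp (-(a * x))) = a⁻¹ := by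
    have := integral_comp_mul_left_Ioi (fun u => Real.exp (-u)) 0 ha
    simp only [mul_zero, integral_exp_neg_Ioi, neg_zero, Real.exp_zero, smul_eq_mul, mul_one] at this
    exact this
  rw [hv]; ring

lemma lint_cexp2 (c a b : ℝ) (hc : 0 ≤ c) (hab : 0 < a + b) :
    ∫⁻ x in Ioi (0:ℝ), ENNReal.ofReal (c * Real.exp (-(a * x)) * Real.exp (-(b * x)))
      = ENNReal.ofReal (c / (a + b)) := by
  have h : ∀ x : ℝ, c * Real.exp (-(a * x)) * Real.exp (-(b * x))
      = c * Real.exp (-((a + b) * x)) := by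
    intro x
    rw [mul_assoc, ← Real.exp_add]
    ring_nf
  simp_rw [h]
  exact lint_cexp c (a + b) hc hab

set_option maxHeartbeats 1600000

/-- Let `X, Y, Z` be independent exponentially distributed with rates
`μ₁, μ₂, μ₃ > 0`, `d₁, d₂ > 0` and `d = d₁ + d₂`.  With the CSA error
probability `P^C(ρ)` and the non-cooperative error probability
`P^{NC}(ρ) = E[Q(√(2dρX))]` (both written as integrals against the
corresponding exponential densities), there exists `ρ₀ > 0` such that for all
`ρ ≥ ρ₀`, `P^C(ρ) < P^{NC}(ρ)`. -/
theorem csa_beats_noncooperative_high_snr (μ₁ μ₂ μ₃ d₁ d₂ d : ℝ)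
    (hμ₁ : 0 < μ₁) (hμ₂ : 0 < μ₂) (hμ₃ : 0 < μ₃) (hd₁ : 0 < d₁) (hd₂ : 0 < d₂)
    (hd : d = d₁ + d₂) :
    ∃ ρ₀ : ℝ, 0 < ρ₀ ∧ ∀ ρ ≥ ρ₀,
      (∫ x in Set.Ioi (0 : ℝ), ∫ y in Set.Ioi (0 : ℝ), ∫ z in Set.Ioi (0 : ℝ),
          (gaussQ (Real.sqrt (2 * d₁ * ρ * x + 2 * d₂ * ρ * y)) *
              gaussQ (Real.sqrt (2 * d₁ * ρ * x)) *
              (1 - gaussQ (Real.sqrt (2 * d₁ * ρ * z))) +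
            gaussQ (Real.sqrt (2 * d₁ * ρ * x)) * gaussQ (Real.sqrt (2 * d₁ * ρ * z))) *
            ((μ₁ * Real.exp (-μ₁ * x)) * (μ₂ * Real.exp (-μ₂ * y)) *
              (μ₃ * Real.exp (-μ₃ * z)))) <
        ∫ x in Set.Ioi (0 : ℝ),
          gaussQ (Real.sqrt (2 * d * ρ * x)) * (μ₁ * Real.exp (-μ₁ * x)) := by
  have hq := gaussQ_one_pos
  have hd0 : 0 < d := by rw [hd]; linarith
  set c₁ : ℝ := gaussQ 1 * μ₁ * Real.exp (-1) / (2 * d) with hc₁def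
  set c₂ : ℝ := μ₁ * μ₂ / (4 * d₁ * d₂) + μ₁ * μ₃ / (4 * d₁ ^ 2) with hc₂def
  have hc₁ : 0 < c₁ := by rw [hc₁def]; positivity
  have hc₂ : 0 < c₂ := by rw [hc₂def]; positivity
  refine ⟨max (max 1 (μ₁ / (2 * d))) (c₂ / c₁ + 1),
    lt_of_lt_of_le one_pos ((le_max_left _ _).trans (le_max_left _ _)), fun ρ hρ => ?_⟩
  have hρ1 : (1:ℝ) ≤ ρ := le_trans ((le_max_left _ _).trans (le_max_left _ _)) hρ
  have hρμ : μ₁ / (2 * d) ≤ ρ := le_trans ((le_max_right _ _).trans (le_max_left _ _)) hρ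
  have hρc : c₂ / c₁ + 1 ≤ ρ := le_trans (le_max_right _ _) hρ
  have hρ0 : 0 < ρ := lt_of_lt_of_le one_pos hρ1
  -- ====================  RHS lower bound  ====================
  set ε : ℝ := 1 / (2 * d * ρ) with hεdef
  have hε0 : 0 < ε := by rw [hεdef]; positivity
  have hRmeas : Measurable fun x : ℝ =>
      gaussQ (Real.sqrt (2 * d * ρ * x)) * (μ₁ * Real.exp (-μ₁ * x)) :=
    (gaussQ_meas.comp (by fun_prop)).mul (by fun_prop)
  have hRint : IntegrableOn (fun x : ℝ =>
      gaussQ (Real.sqrt (2 * d * ρ * x)) * (μ₁ * Real.exp (-μ₁ * x))) (Ioi 0) := by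
    refine Integrable.mono ((exp_neg_integrableOn_Ioi 0 hμ₁).const_mul μ₁)
      hRmeas.aestronglyMeasurable (ae_of_all _ fun x => ?_)
    have hhalf := gaussQ_le_half (Real.sqrt_nonneg (2 * d * ρ * x))
    have h0 := gaussQ_nonneg (Real.sqrt (2 * d * ρ * x))
    have he : 0 < μ₁ * Real.exp (-μ₁ * x) := by positivity
    rw [Real.norm_of_nonneg (mul_nonneg h0 he.le), Real.norm_of_nonneg he.le]
    nlinarith
  have hR1 : (∫ x in Ioc (0:ℝ) ε, gaussQ (Real.sqrt (2 * d * ρ * x)) * (μ₁ * Real.exp (-μ₁ * x)))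
      ≤ ∫ x in Ioi (0:ℝ), gaussQ (Real.sqrt (2 * d * ρ * x)) * (μ₁ * Real.exp (-μ₁ * x)) :=
    setIntegral_mono_set hRint
      (ae_of_all _ fun x => mul_nonneg (gaussQ_nonneg _) (by positivity))
      (HasSubset.Subset.eventuallyLE Ioc_subset_Ioi_self)
  have hR2 : (∫ _x in Ioc (0:ℝ) ε, gaussQ 1 * (μ₁ * Real.exp (-μ₁ * ε)))
      ≤ ∫ x in Ioc (0:ℝ) ε, gaussQ (Real.sqrt (2 * d * ρ * x)) * (μ₁ * Real.exp (-μ₁ * x)) := by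
    refine setIntegral_mono_on (integrableOn_const measure_Ioc_lt_top.ne)
      (hRint.mono_set Ioc_subset_Ioi_self) measurableSet_Ioc fun x hx => ?_
    have hx0 : 0 < x := hx.1
    have hxε : x ≤ ε := hx.2
    have hsq : Real.sqrt (2 * d * ρ * x) ≤ 1 := by
      rw [show (1:ℝ) = Real.sqrt 1 by rw [Real.sqrt_one]]
      apply Real.sqrt_le_sqrt
      calc 2 * d * ρ * x ≤ 2 * d * ρ * ε := by
            have h2dρ : (0:ℝ) ≤ 2 * d * ρ := by positivity
            nlinarith
        _ = 1 := by rw [hεdef]; field_simp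
    have hQ : gaussQ 1 ≤ gaussQ (Real.sqrt (2 * d * ρ * x)) := gaussQ_anti hsq
    have hexp : Real.exp (-μ₁ * ε) ≤ Real.exp (-μ₁ * x) := Real.exp_le_exp.2 (by nlinarith)
    exact mul_le_mul hQ (by nlinarith) (by positivity) (gaussQ_nonneg _)
  have hRconst : (∫ _x in Ioc (0:ℝ) ε, gaussQ 1 * (μ₁ * Real.exp (-μ₁ * ε)))
      = ε * (gaussQ 1 * (μ₁ * Real.exp (-μ₁ * ε))) := by
    rw [setIntegral_const, measureReal_def, Real.volume_Ioc, smul_eq_mul, sub_zero,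
      ENNReal.toReal_ofReal hε0.le]
  have hL : c₁ / ρ ≤ ∫ x in Ioi (0:ℝ),
      gaussQ (Real.sqrt (2 * d * ρ * x)) * (μ₁ * Real.exp (-μ₁ * x)) := by
    have h2d : μ₁ ≤ 2 * d * ρ := by
      rw [div_le_iff₀ (by linarith : (0:ℝ) < 2 * d)] at hρμ; nlinarith
    have hexp1 : Real.exp (-1) ≤ Real.exp (-μ₁ * ε) := by
      apply Real.exp_le_exp.2
      rw [hεdef, neg_mul]
      rw [neg_le_neg_iff, mul_one_div, div_le_one (by positivity)]
      exact h2d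
    calc c₁ / ρ = ε * (gaussQ 1 * (μ₁ * Real.exp (-1))) := by
          rw [hc₁def, hεdef]; field_simp
      _ ≤ ε * (gaussQ 1 * (μ₁ * Real.exp (-μ₁ * ε))) :=
          mul_le_mul_of_nonneg_left
            (mul_le_mul_of_nonneg_left (mul_le_mul_of_nonneg_left hexp1 hμ₁.le) hq.le) hε0.le
      _ ≤ _ := le_trans (le_of_eq hRconst.symm) (le_trans hR2 hR1)
  -- ====================  LHS upper bound  ====================
  have hQs : ∀ u : ℝ, 0 ≤ gaussQ (Real.sqrt u) ∧ gaussQ (Real.sqrt u) ≤ 1/2 :=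
    fun u => ⟨gaussQ_nonneg _, gaussQ_le_half (Real.sqrt_nonneg u)⟩
  have hF0 : ∀ x y z : ℝ, 0 ≤
      (gaussQ (Real.sqrt (2 * d₁ * ρ * x + 2 * d₂ * ρ * y)) *
          gaussQ (Real.sqrt (2 * d₁ * ρ * x)) *
          (1 - gaussQ (Real.sqrt (2 * d₁ * ρ * z))) +
        gaussQ (Real.sqrt (2 * d₁ * ρ * x)) * gaussQ (Real.sqrt (2 * d₁ * ρ * z))) *
        ((μ₁ * Real.exp (-μ₁ * x)) * (μ₂ * Real.exp (-μ₂ * y)) *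
          (μ₃ * Real.exp (-μ₃ * z))) := by
    intro x y z
    obtain ⟨ha0, ha1⟩ := hQs (2 * d₁ * ρ * x + 2 * d₂ * ρ * y)
    obtain ⟨hb0, hb1⟩ := hQs (2 * d₁ * ρ * x)
    obtain ⟨hc0, hc1⟩ := hQs (2 * d₁ * ρ * z)
    have hD : (0:ℝ) ≤ (μ₁ * Real.exp (-μ₁ * x)) * (μ₂ * Real.exp (-μ₂ * y)) *
        (μ₃ * Real.exp (-μ₃ * z)) := by positivity
    refine mul_nonneg (add_nonneg ?_ (mul_nonneg hb0 hc0)) hD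
    exact mul_nonneg (mul_nonneg ha0 hb0) (by linarith)
  have hFm : Measurable (fun p : ℝ × ℝ × ℝ =>
      (gaussQ (Real.sqrt (2 * d₁ * ρ * p.1 + 2 * d₂ * ρ * p.2.1)) *
          gaussQ (Real.sqrt (2 * d₁ * ρ * p.1)) *
          (1 - gaussQ (Real.sqrt (2 * d₁ * ρ * p.2.2))) +
        gaussQ (Real.sqrt (2 * d₁ * ρ * p.1)) * gaussQ (Real.sqrt (2 * d₁ * ρ * p.2.2))) *
        ((μ₁ * Real.exp (-μ₁ * p.1)) * (μ₂ * Real.exp (-μ₂ * p.2.1)) *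
          (μ₃ * Real.exp (-μ₃ * p.2.2)))) := by
    have m1 : Measurable fun p : ℝ × ℝ × ℝ =>
        gaussQ (Real.sqrt (2 * d₁ * ρ * p.1 + 2 * d₂ * ρ * p.2.1)) :=
      gaussQ_meas.comp (by fun_prop)
    have m2 : Measurable fun p : ℝ × ℝ × ℝ => gaussQ (Real.sqrt (2 * d₁ * ρ * p.1)) :=
      gaussQ_meas.comp (by fun_prop)
    have m3 : Measurable fun p : ℝ × ℝ × ℝ => gaussQ (Real.sqrt (2 * d₁ * ρ * p.2.2)) :=
      gaussQ_meas.comp (by fun_prop)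
    exact (((m1.mul m2).mul (measurable_const.sub m3)).add (m2.mul m3)).mul (by fun_prop)
  have hBsm : StronglyMeasurable (fun p : ℝ × ℝ => ∫ z in Ioi (0:ℝ),
      (gaussQ (Real.sqrt (2 * d₁ * ρ * p.1 + 2 * d₂ * ρ * p.2)) *
          gaussQ (Real.sqrt (2 * d₁ * ρ * p.1)) *
          (1 - gaussQ (Real.sqrt (2 * d₁ * ρ * z))) +
        gaussQ (Real.sqrt (2 * d₁ * ρ * p.1)) * gaussQ (Real.sqrt (2 * d₁ * ρ * z))) *
        ((μ₁ * Real.exp (-μ₁ * p.1)) * (μ₂ * Real.exp (-μ₂ * p.2)) *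
          (μ₃ * Real.exp (-μ₃ * z)))) := by
    exact ((hFm.comp
      ((measurable_fst.fst).prodMk ((measurable_fst.snd).prodMk measurable_snd)
        : Measurable fun q : (ℝ × ℝ) × ℝ => (q.1.1, q.1.2, q.2))).stronglyMeasurable).integral_prod_right'
  have hAsm : StronglyMeasurable (fun x : ℝ => ∫ y in Ioi (0:ℝ), ∫ z in Ioi (0:ℝ),
      (gaussQ (Real.sqrt (2 * d₁ * ρ * x + 2 * d₂ * ρ * y)) *
          gaussQ (Real.sqrt (2 * d₁ * ρ * x)) *
          (1 - gaussQ (Real.sqrt (2 * d₁ * ρ * z))) +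
        gaussQ (Real.sqrt (2 * d₁ * ρ * x)) * gaussQ (Real.sqrt (2 * d₁ * ρ * z))) *
        ((μ₁ * Real.exp (-μ₁ * x)) * (μ₂ * Real.exp (-μ₂ * y)) *
          (μ₃ * Real.exp (-μ₃ * z)))) := hBsm.integral_prod_right'
  -- the explicit dominating functions
  have hFG : ∀ x ∈ Ioi (0:ℝ), ∀ y ∈ Ioi (0:ℝ), ∀ z ∈ Ioi (0:ℝ),
      (gaussQ (Real.sqrt (2 * d₁ * ρ * x + 2 * d₂ * ρ * y)) *
          gaussQ (Real.sqrt (2 * d₁ * ρ * x)) *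
          (1 - gaussQ (Real.sqrt (2 * d₁ * ρ * z))) +
        gaussQ (Real.sqrt (2 * d₁ * ρ * x)) * gaussQ (Real.sqrt (2 * d₁ * ρ * z))) *
        ((μ₁ * Real.exp (-μ₁ * x)) * (μ₂ * Real.exp (-μ₂ * y)) *
          (μ₃ * Real.exp (-μ₃ * z)))
      ≤ (μ₁ * μ₂ * μ₃ / 4 * Real.exp (-(d₁ * ρ * x)) * Real.exp (-(μ₁ * x)) *
          Real.exp (-(d₂ * ρ * y)) * Real.exp (-(μ₂ * y)) * Real.exp (-(μ₃ * z)))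
        + (μ₁ * μ₂ * μ₃ / 4 * Real.exp (-(d₁ * ρ * x)) * Real.exp (-(μ₁ * x)) *
          Real.exp (-(μ₂ * y)) * Real.exp (-(d₁ * ρ * z)) * Real.exp (-(μ₃ * z))) := by
    intro x hx y hy z hz
    rw [mem_Ioi] at hx hy hz
    have hQa : gaussQ (Real.sqrt (2 * d₁ * ρ * x + 2 * d₂ * ρ * y))
        ≤ 1/2 * (Real.exp (-(d₁ * ρ * x)) * Real.exp (-(d₂ * ρ * y))) := by
      have h := gaussQ_chernoff (Real.sqrt (2 * d₁ * ρ * x + 2 * d₂ * ρ * y)) (Real.sqrt_nonneg _)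
      rw [Real.sq_sqrt (by positivity)] at h
      rw [show -(2 * d₁ * ρ * x + 2 * d₂ * ρ * y) / 2 = -(d₁ * ρ * x) + -(d₂ * ρ * y) by ring,
        Real.exp_add] at h
      exact h
    have hQb : gaussQ (Real.sqrt (2 * d₁ * ρ * x)) ≤ 1/2 * Real.exp (-(d₁ * ρ * x)) := by
      have h := gaussQ_chernoff (Real.sqrt (2 * d₁ * ρ * x)) (Real.sqrt_nonneg _)
      rw [Real.sq_sqrt (by positivity)] at h
      rw [show -(2 * d₁ * ρ * x) / 2 = -(d₁ * ρ * x) by ring] at h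
      exact h
    have hQc : gaussQ (Real.sqrt (2 * d₁ * ρ * z)) ≤ 1/2 * Real.exp (-(d₁ * ρ * z)) := by
      have h := gaussQ_chernoff (Real.sqrt (2 * d₁ * ρ * z)) (Real.sqrt_nonneg _)
      rw [Real.sq_sqrt (by positivity)] at h
      rw [show -(2 * d₁ * ρ * z) / 2 = -(d₁ * ρ * z) by ring] at h
      exact h
    obtain ⟨ha0, ha1⟩ := hQs (2 * d₁ * ρ * x + 2 * d₂ * ρ * y)
    obtain ⟨hb0, hb1⟩ := hQs (2 * d₁ * ρ * x)
    obtain ⟨hc0, hc1⟩ := hQs (2 * d₁ * ρ * z)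
    have hT1 : gaussQ (Real.sqrt (2 * d₁ * ρ * x + 2 * d₂ * ρ * y)) *
        gaussQ (Real.sqrt (2 * d₁ * ρ * x)) * (1 - gaussQ (Real.sqrt (2 * d₁ * ρ * z)))
        ≤ (1/2 * (Real.exp (-(d₁ * ρ * x)) * Real.exp (-(d₂ * ρ * y)))) * (1/2) * 1 := by
      have h1 : gaussQ (Real.sqrt (2 * d₁ * ρ * x + 2 * d₂ * ρ * y)) *
          gaussQ (Real.sqrt (2 * d₁ * ρ * x))
          ≤ (1/2 * (Real.exp (-(d₁ * ρ * x)) * Real.exp (-(d₂ * ρ * y)))) * (1/2) :=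
        mul_le_mul hQa hb1 hb0 (by positivity)
      exact mul_le_mul h1 (by linarith) (by linarith) (by positivity)
    have hT2 : gaussQ (Real.sqrt (2 * d₁ * ρ * x)) * gaussQ (Real.sqrt (2 * d₁ * ρ * z))
        ≤ (1/2 * Real.exp (-(d₁ * ρ * x))) * (1/2 * Real.exp (-(d₁ * ρ * z))) :=
      mul_le_mul hQb hQc hc0 (by positivity)
    have hD : (0:ℝ) ≤ (μ₁ * Real.exp (-μ₁ * x)) * (μ₂ * Real.exp (-μ₂ * y)) *
        (μ₃ * Real.exp (-μ₃ * z)) := by positivity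
    calc _ ≤ ((1/2 * (Real.exp (-(d₁ * ρ * x)) * Real.exp (-(d₂ * ρ * y)))) * (1/2) * 1
          + (1/2 * Real.exp (-(d₁ * ρ * x))) * (1/2 * Real.exp (-(d₁ * ρ * z)))) *
          ((μ₁ * Real.exp (-μ₁ * x)) * (μ₂ * Real.exp (-μ₂ * y)) *
            (μ₃ * Real.exp (-μ₃ * z))) :=
        mul_le_mul_of_nonneg_right (add_le_add hT1 hT2) hD
      _ = _ := by simp only [neg_mul]; ring
  -- compute the integral of the dominating function
  have habv : (∫⁻ x in Ioi (0:ℝ), ∫⁻ y in Ioi (0:ℝ), ∫⁻ z in Ioi (0:ℝ),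
      ENNReal.ofReal
        ((μ₁ * μ₂ * μ₃ / 4 * Real.exp (-(d₁ * ρ * x)) * Real.exp (-(μ₁ * x)) *
          Real.exp (-(d₂ * ρ * y)) * Real.exp (-(μ₂ * y)) * Real.exp (-(μ₃ * z)))
        + (μ₁ * μ₂ * μ₃ / 4 * Real.exp (-(d₁ * ρ * x)) * Real.exp (-(μ₁ * x)) *
          Real.exp (-(μ₂ * y)) * Real.exp (-(d₁ * ρ * z)) * Real.exp (-(μ₃ * z)))))
      = ENNReal.ofReal (μ₁ * μ₂ * μ₃ / 4 / μ₃ / (d₂ * ρ + μ₂) / (d₁ * ρ + μ₁))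
        + ENNReal.ofReal (μ₁ * μ₂ * μ₃ / 4 / (d₁ * ρ + μ₃) / μ₂ / (d₁ * ρ + μ₁)) := by
    have hsplit : ∀ x y z : ℝ,
        ENNReal.ofReal
          ((μ₁ * μ₂ * μ₃ / 4 * Real.exp (-(d₁ * ρ * x)) * Real.exp (-(μ₁ * x)) *
            Real.exp (-(d₂ * ρ * y)) * Real.exp (-(μ₂ * y)) * Real.exp (-(μ₃ * z)))
          + (μ₁ * μ₂ * μ₃ / 4 * Real.exp (-(d₁ * ρ * x)) * Real.exp (-(μ₁ * x)) *
            Real.exp (-(μ₂ * y)) * Real.exp (-(d₁ * ρ * z)) * Real.exp (-(μ₃ * z))))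
        = ENNReal.ofReal
            (μ₁ * μ₂ * μ₃ / 4 * Real.exp (-(d₁ * ρ * x)) * Real.exp (-(μ₁ * x)) *
            Real.exp (-(d₂ * ρ * y)) * Real.exp (-(μ₂ * y)) * Real.exp (-(μ₃ * z)))
          + ENNReal.ofReal
            (μ₁ * μ₂ * μ₃ / 4 * Real.exp (-(d₁ * ρ * x)) * Real.exp (-(μ₁ * x)) *
            Real.exp (-(μ₂ * y)) * Real.exp (-(d₁ * ρ * z)) * Real.exp (-(μ₃ * z))) :=
      fun x y z => ENNReal.ofReal_add (by positivity) (by positivity)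
    have hz' : ∀ x y : ℝ,
        (∫⁻ z in Ioi (0:ℝ),
          (ENNReal.ofReal
            (μ₁ * μ₂ * μ₃ / 4 * Real.exp (-(d₁ * ρ * x)) * Real.exp (-(μ₁ * x)) *
            Real.exp (-(d₂ * ρ * y)) * Real.exp (-(μ₂ * y)) * Real.exp (-(μ₃ * z)))
          + ENNReal.ofReal
            (μ₁ * μ₂ * μ₃ / 4 * Real.exp (-(d₁ * ρ * x)) * Real.exp (-(μ₁ * x)) *
            Real.exp (-(μ₂ * y)) * Real.exp (-(d₁ * ρ * z)) * Real.exp (-(μ₃ * z)))))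
        = ENNReal.ofReal
            (μ₁ * μ₂ * μ₃ / 4 / μ₃ * Real.exp (-(d₁ * ρ * x)) * Real.exp (-(μ₁ * x)) *
            Real.exp (-(d₂ * ρ * y)) * Real.exp (-(μ₂ * y)))
          + ENNReal.ofReal
            (μ₁ * μ₂ * μ₃ / 4 / (d₁ * ρ + μ₃) * Real.exp (-(d₁ * ρ * x)) *
            Real.exp (-(μ₁ * x)) * Real.exp (-(μ₂ * y))) := by
      intro x y
      rw [lintegral_add_left (Measurable.ennreal_ofReal (by fun_prop)),
        lint_cexp (μ₁ * μ₂ * μ₃ / 4 * Real.exp (-(d₁ * ρ * x)) * Real.exp (-(μ₁ * x)) *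
          Real.exp (-(d₂ * ρ * y)) * Real.exp (-(μ₂ * y))) μ₃ (by positivity) hμ₃,
        lint_cexp2 (μ₁ * μ₂ * μ₃ / 4 * Real.exp (-(d₁ * ρ * x)) * Real.exp (-(μ₁ * x)) *
          Real.exp (-(μ₂ * y))) (d₁ * ρ) μ₃ (by positivity) (by positivity)]
      congr 1
      · exact congrArg ENNReal.ofReal (by ring)
      · exact congrArg ENNReal.ofReal (by ring)
    have hy' : ∀ x : ℝ,
        (∫⁻ y in Ioi (0:ℝ),
          (ENNReal.ofReal
            (μ₁ * μ₂ * μ₃ / 4 / μ₃ * Real.exp (-(d₁ * ρ * x)) * Real.exp (-(μ₁ * x)) *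
            Real.exp (-(d₂ * ρ * y)) * Real.exp (-(μ₂ * y)))
          + ENNReal.ofReal
            (μ₁ * μ₂ * μ₃ / 4 / (d₁ * ρ + μ₃) * Real.exp (-(d₁ * ρ * x)) *
            Real.exp (-(μ₁ * x)) * Real.exp (-(μ₂ * y)))))
        = ENNReal.ofReal
            (μ₁ * μ₂ * μ₃ / 4 / μ₃ / (d₂ * ρ + μ₂) * Real.exp (-(d₁ * ρ * x)) *
            Real.exp (-(μ₁ * x)))
          + ENNReal.ofReal
            (μ₁ * μ₂ * μ₃ / 4 / (d₁ * ρ + μ₃) / μ₂ * Real.exp (-(d₁ * ρ * x)) *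
            Real.exp (-(μ₁ * x))) := by
      intro x
      rw [lintegral_add_left (Measurable.ennreal_ofReal (by fun_prop)),
        lint_cexp2 (μ₁ * μ₂ * μ₃ / 4 / μ₃ * Real.exp (-(d₁ * ρ * x)) * Real.exp (-(μ₁ * x)))
          (d₂ * ρ) μ₂ (by positivity) (by positivity),
        lint_cexp (μ₁ * μ₂ * μ₃ / 4 / (d₁ * ρ + μ₃) * Real.exp (-(d₁ * ρ * x)) *
          Real.exp (-(μ₁ * x))) μ₂ (by positivity) hμ₂]
      congr 1
      · exact congrArg ENNReal.ofReal (by ring)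
      · exact congrArg ENNReal.ofReal (by ring)
    simp_rw [hsplit, hz', hy']
    rw [lintegral_add_left (Measurable.ennreal_ofReal (by fun_prop)),
      lint_cexp2 (μ₁ * μ₂ * μ₃ / 4 / μ₃ / (d₂ * ρ + μ₂)) (d₁ * ρ) μ₁
        (by positivity) (by positivity),
      lint_cexp2 (μ₁ * μ₂ * μ₃ / 4 / (d₁ * ρ + μ₃) / μ₂) (d₁ * ρ) μ₁
        (by positivity) (by positivity)]
  -- put the upper bound chain together
  have hkey : (∫ x in Ioi (0:ℝ), ∫ y in Ioi (0:ℝ), ∫ z in Ioi (0:ℝ),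
      (gaussQ (Real.sqrt (2 * d₁ * ρ * x + 2 * d₂ * ρ * y)) *
          gaussQ (Real.sqrt (2 * d₁ * ρ * x)) *
          (1 - gaussQ (Real.sqrt (2 * d₁ * ρ * z))) +
        gaussQ (Real.sqrt (2 * d₁ * ρ * x)) * gaussQ (Real.sqrt (2 * d₁ * ρ * z))) *
        ((μ₁ * Real.exp (-μ₁ * x)) * (μ₂ * Real.exp (-μ₂ * y)) *
          (μ₃ * Real.exp (-μ₃ * z))))
      ≤ μ₁ * μ₂ * μ₃ / 4 / μ₃ / (d₂ * ρ + μ₂) / (d₁ * ρ + μ₁)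
        + μ₁ * μ₂ * μ₃ / 4 / (d₁ * ρ + μ₃) / μ₂ / (d₁ * ρ + μ₁) := by
    have h1 : (∫ x in Ioi (0:ℝ), ∫ y in Ioi (0:ℝ), ∫ z in Ioi (0:ℝ),
        (gaussQ (Real.sqrt (2 * d₁ * ρ * x + 2 * d₂ * ρ * y)) *
            gaussQ (Real.sqrt (2 * d₁ * ρ * x)) *
            (1 - gaussQ (Real.sqrt (2 * d₁ * ρ * z))) +
          gaussQ (Real.sqrt (2 * d₁ * ρ * x)) * gaussQ (Real.sqrt (2 * d₁ * ρ * z))) *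
          ((μ₁ * Real.exp (-μ₁ * x)) * (μ₂ * Real.exp (-μ₂ * y)) *
            (μ₃ * Real.exp (-μ₃ * z))))
        = (∫⁻ x in Ioi (0:ℝ), ENNReal.ofReal (∫ y in Ioi (0:ℝ), ∫ z in Ioi (0:ℝ),
          (gaussQ (Real.sqrt (2 * d₁ * ρ * x + 2 * d₂ * ρ * y)) *
              gaussQ (Real.sqrt (2 * d₁ * ρ * x)) *
              (1 - gaussQ (Real.sqrt (2 * d₁ * ρ * z))) +
            gaussQ (Real.sqrt (2 * d₁ * ρ * x)) * gaussQ (Real.sqrt (2 * d₁ * ρ * z))) *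
            ((μ₁ * Real.exp (-μ₁ * x)) * (μ₂ * Real.exp (-μ₂ * y)) *
              (μ₃ * Real.exp (-μ₃ * z))))).toReal :=
      integral_eq_lintegral_of_nonneg_ae
        (ae_of_all _ fun x => integral_nonneg fun y => integral_nonneg fun z => hF0 x y z)
        hAsm.aestronglyMeasurable
    have h2 : ∀ x : ℝ, ENNReal.ofReal (∫ y in Ioi (0:ℝ), ∫ z in Ioi (0:ℝ),
        (gaussQ (Real.sqrt (2 * d₁ * ρ * x + 2 * d₂ * ρ * y)) *
            gaussQ (Real.sqrt (2 * d₁ * ρ * x)) *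
            (1 - gaussQ (Real.sqrt (2 * d₁ * ρ * z))) +
          gaussQ (Real.sqrt (2 * d₁ * ρ * x)) * gaussQ (Real.sqrt (2 * d₁ * ρ * z))) *
          ((μ₁ * Real.exp (-μ₁ * x)) * (μ₂ * Real.exp (-μ₂ * y)) *
            (μ₃ * Real.exp (-μ₃ * z))))
        ≤ ∫⁻ y in Ioi (0:ℝ), ∫⁻ z in Ioi (0:ℝ), ENNReal.ofReal
          ((gaussQ (Real.sqrt (2 * d₁ * ρ * x + 2 * d₂ * ρ * y)) *
              gaussQ (Real.sqrt (2 * d₁ * ρ * x)) *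
              (1 - gaussQ (Real.sqrt (2 * d₁ * ρ * z))) +
            gaussQ (Real.sqrt (2 * d₁ * ρ * x)) * gaussQ (Real.sqrt (2 * d₁ * ρ * z))) *
            ((μ₁ * Real.exp (-μ₁ * x)) * (μ₂ * Real.exp (-μ₂ * y)) *
              (μ₃ * Real.exp (-μ₃ * z)))) := by
      intro x
      rw [integral_eq_lintegral_of_nonneg_ae
        (ae_of_all _ fun y => integral_nonneg fun z => hF0 x y z)
        ((hBsm.comp_measurable measurable_prodMk_left).aestronglyMeasurable)]
      refine le_trans ENNReal.ofReal_toReal_le (lintegral_mono fun y => ?_)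
      rw [integral_eq_lintegral_of_nonneg_ae (ae_of_all _ fun z => hF0 x y z)
        ((hFm.comp ((measurable_const.prodMk (measurable_const.prodMk measurable_id))
          : Measurable fun z : ℝ => ((x, y, z) : ℝ × ℝ × ℝ))).aestronglyMeasurable)]
      exact ENNReal.ofReal_toReal_le
    have h3 : (∫⁻ x in Ioi (0:ℝ), ∫⁻ y in Ioi (0:ℝ), ∫⁻ z in Ioi (0:ℝ), ENNReal.ofReal
        ((gaussQ (Real.sqrt (2 * d₁ * ρ * x + 2 * d₂ * ρ * y)) *
            gaussQ (Real.sqrt (2 * d₁ * ρ * x)) *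
            (1 - gaussQ (Real.sqrt (2 * d₁ * ρ * z))) +
          gaussQ (Real.sqrt (2 * d₁ * ρ * x)) * gaussQ (Real.sqrt (2 * d₁ * ρ * z))) *
          ((μ₁ * Real.exp (-μ₁ * x)) * (μ₂ * Real.exp (-μ₂ * y)) *
            (μ₃ * Real.exp (-μ₃ * z)))))
        ≤ ∫⁻ x in Ioi (0:ℝ), ∫⁻ y in Ioi (0:ℝ), ∫⁻ z in Ioi (0:ℝ),
          ENNReal.ofReal
            ((μ₁ * μ₂ * μ₃ / 4 * Real.exp (-(d₁ * ρ * x)) * Real.exp (-(μ₁ * x)) *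
              Real.exp (-(d₂ * ρ * y)) * Real.exp (-(μ₂ * y)) * Real.exp (-(μ₃ * z)))
            + (μ₁ * μ₂ * μ₃ / 4 * Real.exp (-(d₁ * ρ * x)) * Real.exp (-(μ₁ * x)) *
              Real.exp (-(μ₂ * y)) * Real.exp (-(d₁ * ρ * z)) * Real.exp (-(μ₃ * z)))) := by
      refine lintegral_mono_ae ((ae_restrict_iff' measurableSet_Ioi).2 (ae_of_all _ fun x hx => ?_))
      refine lintegral_mono_ae ((ae_restrict_iff' measurableSet_Ioi).2 (ae_of_all _ fun y hy => ?_))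
      refine lintegral_mono_ae ((ae_restrict_iff' measurableSet_Ioi).2 (ae_of_all _ fun z hz => ?_))
      exact ENNReal.ofReal_le_ofReal (hFG x hx y hy z hz)
    rw [h1]
    have hle : (∫⁻ x in Ioi (0:ℝ), ENNReal.ofReal (∫ y in Ioi (0:ℝ), ∫ z in Ioi (0:ℝ),
        (gaussQ (Real.sqrt (2 * d₁ * ρ * x + 2 * d₂ * ρ * y)) *
            gaussQ (Real.sqrt (2 * d₁ * ρ * x)) *
            (1 - gaussQ (Real.sqrt (2 * d₁ * ρ * z))) +
          gaussQ (Real.sqrt (2 * d₁ * ρ * x)) * gaussQ (Real.sqrt (2 * d₁ * ρ * z))) *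
          ((μ₁ * Real.exp (-μ₁ * x)) * (μ₂ * Real.exp (-μ₂ * y)) *
            (μ₃ * Real.exp (-μ₃ * z)))))
        ≤ ENNReal.ofReal (μ₁ * μ₂ * μ₃ / 4 / μ₃ / (d₂ * ρ + μ₂) / (d₁ * ρ + μ₁))
          + ENNReal.ofReal (μ₁ * μ₂ * μ₃ / 4 / (d₁ * ρ + μ₃) / μ₂ / (d₁ * ρ + μ₁)) := by
      rw [← habv]
      exact le_trans (lintegral_mono h2) h3
    calc (∫⁻ x in Ioi (0:ℝ), ENNReal.ofReal _).toReal
        ≤ (ENNReal.ofReal (μ₁ * μ₂ * μ₃ / 4 / μ₃ / (d₂ * ρ + μ₂) / (d₁ * ρ + μ₁))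
          + ENNReal.ofReal (μ₁ * μ₂ * μ₃ / 4 / (d₁ * ρ + μ₃) / μ₂ / (d₁ * ρ + μ₁))).toReal :=
        ENNReal.toReal_mono (by simp [ENNReal.add_ne_top]) hle
      _ = _ := by
        rw [ENNReal.toReal_add ENNReal.ofReal_ne_top ENNReal.ofReal_ne_top,
          ENNReal.toReal_ofReal (by positivity), ENNReal.toReal_ofReal (by positivity)]
  -- ====================  final comparison  ====================
  have hv1 : μ₁ * μ₂ * μ₃ / 4 / μ₃ / (d₂ * ρ + μ₂) / (d₁ * ρ + μ₁)
      ≤ μ₁ * μ₂ / (4 * d₁ * d₂) / ρ ^ 2 := by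
    have e1 : μ₁ * μ₂ * μ₃ / 4 / μ₃ / (d₂ * ρ + μ₂) / (d₁ * ρ + μ₁)
        = (μ₁ * μ₂ / 4) / ((d₂ * ρ + μ₂) * (d₁ * ρ + μ₁)) := by
      field_simp
    have e2 : μ₁ * μ₂ / (4 * d₁ * d₂) / ρ ^ 2 = (μ₁ * μ₂ / 4) / ((d₂ * ρ) * (d₁ * ρ)) := by
      field_simp
    rw [e1, e2]
    exact div_le_div_of_nonneg_left (by positivity) (by positivity)
      (by nlinarith [mul_pos (mul_pos hd₂ hρ0) hμ₁, mul_pos hμ₂ (mul_pos hd₁ hρ0),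
        mul_pos hμ₂ hμ₁])
  have hv2 : μ₁ * μ₂ * μ₃ / 4 / (d₁ * ρ + μ₃) / μ₂ / (d₁ * ρ + μ₁)
      ≤ μ₁ * μ₃ / (4 * d₁ ^ 2) / ρ ^ 2 := by
    have e1 : μ₁ * μ₂ * μ₃ / 4 / (d₁ * ρ + μ₃) / μ₂ / (d₁ * ρ + μ₁)
        = (μ₁ * μ₃ / 4) / ((d₁ * ρ + μ₃) * (d₁ * ρ + μ₁)) := by
      field_simp
    have e2 : μ₁ * μ₃ / (4 * d₁ ^ 2) / ρ ^ 2 = (μ₁ * μ₃ / 4) / ((d₁ * ρ) * (d₁ * ρ)) := by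
      field_simp
    rw [e1, e2]
    exact div_le_div_of_nonneg_left (by positivity) (by positivity)
      (by nlinarith [mul_pos (mul_pos hd₁ hρ0) hμ₁, mul_pos hμ₃ (mul_pos hd₁ hρ0),
        mul_pos hμ₃ hμ₁])
  have hcρ : c₂ / ρ ^ 2 < c₁ / ρ := by
    rw [div_lt_div_iff₀ (by positivity) hρ0]
    have hcc : c₁ * (c₂ / c₁ + 1) = c₂ + c₁ := by
      field_simp
    have h5 : c₂ + c₁ ≤ c₁ * ρ :=
      le_trans (le_of_eq hcc.symm) (mul_le_mul_of_nonneg_left hρc hc₁.le)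
    nlinarith [mul_le_mul_of_nonneg_right h5 hρ0.le, mul_pos hc₁ hρ0]
  have hsum : c₂ / ρ ^ 2 = μ₁ * μ₂ / (4 * d₁ * d₂) / ρ ^ 2 + μ₁ * μ₃ / (4 * d₁ ^ 2) / ρ ^ 2 := by
    rw [hc₂def]; rw [add_div]
  calc (∫ x in Ioi (0:ℝ), ∫ y in Ioi (0:ℝ), ∫ z in Ioi (0:ℝ),
      (gaussQ (Real.sqrt (2 * d₁ * ρ * x + 2 * d₂ * ρ * y)) *
          gaussQ (Real.sqrt (2 * d₁ * ρ * x)) *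
          (1 - gaussQ (Real.sqrt (2 * d₁ * ρ * z))) +
        gaussQ (Real.sqrt (2 * d₁ * ρ * x)) * gaussQ (Real.sqrt (2 * d₁ * ρ * z))) *
        ((μ₁ * Real.exp (-μ₁ * x)) * (μ₂ * Real.exp (-μ₂ * y)) *
          (μ₃ * Real.exp (-μ₃ * z))))
      ≤ μ₁ * μ₂ * μ₃ / 4 / μ₃ / (d₂ * ρ + μ₂) / (d₁ * ρ + μ₁)
        + μ₁ * μ₂ * μ₃ / 4 / (d₁ * ρ + μ₃) / μ₂ / (d₁ * ρ + μ₁) := hkey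
    _ ≤ c₂ / ρ ^ 2 := by rw [hsum]; exact add_le_add hv1 hv2
    _ < c₁ / ρ := hcρ
    _ ≤ _ := hL
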